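/- Let G = (V,E) be a DAG and Π a partition of V with i ∼_Π j for distinct nodes i, j (i.e. i and j lie in the same block). Let A_i ⊆ V\{i} and A_j ⊆ V\{j} satisfy pa(i) ⊆ A_i ⊆ V \ de(i) and pa(j) ⊆ A_j ⊆ V \ de(j). Then every covariance matrix Σ ∈ M_{G,Π} satisfies Σ_{ii} − Σ_{i,A_i}(Σ_{A_i,A_i})^{-1}Σ_{A_i,i} = Σ_{jj} − Σ_{j,A_j}(Σ_{A_j,A_j})^{-1}Σ_{A_j,j}. -/

import Mathlib

/-!
Write `B = 1 - Λ`, so that `Σ = B⁻ᵀ D B⁻¹` with `D = diagonal ω` and hence `Σ B = B⁻ᵀ D`.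
Column `i` of `B` is `eᵢ - Λ_{·,i}`, supported on `{i} ∪ pa(i) ⊆ {i} ∪ A`, so reading off
entry `(a, i)` gives `Σ_{a,i} - Σ_{a,A} Λ_{A,i} = (B⁻¹)_{i,a} ω_i` for every `a`.
On a DAG `Λ` is nilpotent, so `B⁻¹ = ∑ Λᵏ` is supported on pairs `(p, q)` with `q` a
descendant of `p` and has unit diagonal. For `a ∈ A ⊆ V \ de(i)` the right side vanishes:
`Λ_{A,i}` solves the normal equations `Σ_{A,A} x = Σ_{A,i}` (`Σ_{A,A}` is invertible since `Σ`
is positive definite), so the conditional variance of `i` given `A` is `Σ_{ii} - Σ_{i,A} Λ_{A,i}`,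
and by the entry `a = i` this is `ω_i`, which nodes in one block of `Π` share.
-/

open Matrix

/-- The conditional variance `Σ_{ii} - Σ_{i,A} (Σ_{A,A})⁻¹ Σ_{A,i}` of variable `i`
given the variables in `A`. -/
noncomputable def condVar {V : Type*} [Fintype V] [DecidableEq V]
    (Cov : Matrix V V ℝ) (i : V) (A : Finset V) : ℝ :=
  Cov i i - ∑ a : A, ∑ b : A,
    Cov i a * (Cov.submatrix (Subtype.val : A → V) Subtype.val)⁻¹ a b * Cov b i

/-- The partially homoscedastic linear Gaussian model `M_{G,Π}`: covariance matrices
`(I-Λ)^{-T} diag(ω) (I-Λ)^{-1}` with `Λ` supported on the edges `E` and `ω` positive,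
where `ω a = ω b` whenever `a` and `b` are in the same block of the partition
(encoded by the equivalence relation `r`). -/
def PHModel {V : Type*} [Fintype V] [DecidableEq V]
    (E : V → V → Prop) (r : V → V → Prop) : Set (Matrix V V ℝ) :=
  {C | ∃ (Λ : Matrix V V ℝ) (ω : V → ℝ),
    (∀ a b, ¬ E a b → Λ a b = 0) ∧ (∀ a, 0 < ω a) ∧
    (∀ a b, r a b → ω a = ω b) ∧
    C = ((1 - Λ)ᵀ)⁻¹ * Matrix.diagonal ω * (1 - Λ)⁻¹}

open Finset Relation

theorem Relation.ncard_setOf_reflTransGen_lt {V : Type*} [Finite V] {E : V → V → Prop}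
    (hacyc : ∀ v, ¬ TransGen E v v) {a b : V} (hab : E a b) :
    {x | ReflTransGen E b x}.ncard < {x | ReflTransGen E a x}.ncard := by
  refine Set.ncard_lt_ncard ((Set.ssubset_iff_of_subset fun x hx => .head hab hx).2 ?_)
    (Set.toFinite _)
  exact ⟨a, .refl, fun hba => hacyc a (.head' hab hba)⟩

namespace Matrix

section Semiring

variable {V R : Type*} [Fintype V] [DecidableEq V] [Semiring R] {E : V → V → Prop}
  {Λ : Matrix V V R}

theorem exists_rel_of_pow_succ_apply_ne_zero (hΛ : ∀ a b, ¬ E a b → Λ a b = 0) {k : ℕ}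
    {p q : V} (h : (Λ ^ (k + 1)) p q ≠ 0) : ∃ b, E p b ∧ (Λ ^ k) b q ≠ 0 := by
  rw [pow_succ', mul_apply] at h
  obtain ⟨b, -, hb⟩ := exists_ne_zero_of_sum_ne_zero h
  exact ⟨b, not_not.1 fun hE => left_ne_zero_of_mul hb (hΛ p b hE), right_ne_zero_of_mul hb⟩

theorem reflTransGen_of_pow_apply_ne_zero (hΛ : ∀ a b, ¬ E a b → Λ a b = 0) :
    ∀ {k : ℕ} {p q : V}, (Λ ^ k) p q ≠ 0 → ReflTransGen E p q
  | 0, p, q, h => by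
    obtain rfl | hpq := eq_or_ne p q
    · exact .refl
    · exact absurd (one_apply_ne hpq) (by rwa [pow_zero] at h)
  | _ + 1, _, _, h => by
    obtain ⟨b, hpb, hb⟩ := exists_rel_of_pow_succ_apply_ne_zero hΛ h
    exact .head hpb (reflTransGen_of_pow_apply_ne_zero hΛ hb)

theorem transGen_of_pow_succ_apply_ne_zero (hΛ : ∀ a b, ¬ E a b → Λ a b = 0)
    {k : ℕ} {p q : V} (h : (Λ ^ (k + 1)) p q ≠ 0) : TransGen E p q := by
  obtain ⟨b, hpb, hb⟩ := exists_rel_of_pow_succ_apply_ne_zero hΛ h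
  exact .head' hpb (reflTransGen_of_pow_apply_ne_zero hΛ hb)

theorem lt_ncard_of_pow_apply_ne_zero (hacyc : ∀ v, ¬ TransGen E v v)
    (hΛ : ∀ a b, ¬ E a b → Λ a b = 0) :
    ∀ {k : ℕ} {p q : V}, (Λ ^ k) p q ≠ 0 → k < {x | ReflTransGen E p x}.ncard
  | 0, p, _, _ => (Set.ncard_pos (Set.toFinite _)).2 ⟨p, .refl⟩
  | _ + 1, _, _, h => by
    obtain ⟨b, hpb, hb⟩ := exists_rel_of_pow_succ_apply_ne_zero hΛ h
    have hb_lt := lt_ncard_of_pow_apply_ne_zero hacyc hΛ hb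
    have hdesc := ncard_setOf_reflTransGen_lt hacyc hpb
    omega

theorem pow_card_eq_zero_of_acyclic (hacyc : ∀ v, ¬ TransGen E v v)
    (hΛ : ∀ a b, ¬ E a b → Λ a b = 0) : Λ ^ Fintype.card V = 0 := by
  ext p q
  by_contra h
  have hle := (Set.ncard_le_card {x | ReflTransGen E p x}).trans_eq Nat.card_eq_fintype_card
  exact (lt_ncard_of_pow_apply_ne_zero hacyc hΛ h).not_ge hle

end Semiring

section CommRing

variable {V R : Type*} [Fintype V] [DecidableEq V] [CommRing R] {E : V → V → Prop}
  {Λ : Matrix V V R}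

theorem inv_one_sub_eq_geom_sum {n : ℕ} (h : Λ ^ n = 0) :
    (1 - Λ)⁻¹ = ∑ k ∈ range n, Λ ^ k :=
  inv_eq_right_inv (by rw [mul_neg_geom_sum, h, sub_zero])

theorem isUnit_det_one_sub_of_acyclic (hacyc : ∀ v, ¬ TransGen E v v)
    (hΛ : ∀ a b, ¬ E a b → Λ a b = 0) : IsUnit (1 - Λ).det :=
  isUnit_det_of_right_inverse
    (by rw [mul_neg_geom_sum, pow_card_eq_zero_of_acyclic hacyc hΛ, sub_zero])

theorem reflTransGen_of_inv_one_sub_apply_ne_zero (hacyc : ∀ v, ¬ TransGen E v v)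
    (hΛ : ∀ a b, ¬ E a b → Λ a b = 0) {p q : V} (h : (1 - Λ)⁻¹ p q ≠ 0) :
    ReflTransGen E p q := by
  rw [inv_one_sub_eq_geom_sum (pow_card_eq_zero_of_acyclic hacyc hΛ), sum_apply] at h
  obtain ⟨k, -, hk⟩ := exists_ne_zero_of_sum_ne_zero h
  exact reflTransGen_of_pow_apply_ne_zero hΛ hk

theorem inv_one_sub_apply_self_of_acyclic (hacyc : ∀ v, ¬ TransGen E v v)
    (hΛ : ∀ a b, ¬ E a b → Λ a b = 0) (p : V) : (1 - Λ)⁻¹ p p = 1 := by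
  have hcard : 0 < Fintype.card V := Fintype.card_pos_iff.2 ⟨p⟩
  rw [inv_one_sub_eq_geom_sum (pow_card_eq_zero_of_acyclic hacyc hΛ), sum_apply,
    sum_eq_single_of_mem 0 (mem_range.2 hcard), pow_zero, one_apply_eq]
  rintro (_ | k) - hk
  · exact absurd rfl hk
  · by_contra h
    exact hacyc p (transGen_of_pow_succ_apply_ne_zero hΛ h)

end CommRing

end Matrix

theorem condVar_eq_of_submatrix_mulVec_eq {V : Type*} [Fintype V] [DecidableEq V]
    {Cov : Matrix V V ℝ} {i : V} {A : Finset V}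
    (hS : IsUnit (Cov.submatrix (Subtype.val : A → V) Subtype.val).det) {c : A → ℝ}
    (hc : Cov.submatrix Subtype.val Subtype.val *ᵥ c = fun a : A => Cov a i) :
    condVar Cov i A = Cov i i - ∑ a : A, Cov i a * c a := by
  have hinv :
      (Cov.submatrix (Subtype.val : A → V) Subtype.val)⁻¹ *ᵥ (fun a : A => Cov a i) = c := by
    rw [← hc, mulVec_mulVec, nonsing_inv_mul _ hS, one_mulVec]
  unfold condVar
  congr 1
  refine sum_congr rfl fun a _ => ?_
  simp only [mul_assoc, ← mul_sum, ← hinv, mulVec, dotProduct]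

section StructuralEquations

variable {V : Type*} [Fintype V] [DecidableEq V]

noncomputable def structuralCov {R : Type*} [CommRing R] (Λ : Matrix V V R) (ω : V → R) :
    Matrix V V R :=
  ((1 - Λ)ᵀ)⁻¹ * diagonal ω * (1 - Λ)⁻¹

theorem structuralCov_sub_sum_mul_apply {R : Type*} [CommRing R] {Λ : Matrix V V R}
    (hB : IsUnit (1 - Λ).det) (ω : V → R) (a : V) {i : V} {A : Finset V}
    (hA : ∀ b ∉ A, Λ b i = 0) :
    structuralCov Λ ω a i - ∑ b : A, structuralCov Λ ω a b * Λ b i = (1 - Λ)⁻¹ i a * ω i := by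
  set Cov := structuralCov Λ ω with hCov
  have hmul : Cov * (1 - Λ) = (1 - Λ)⁻¹ᵀ * diagonal ω := by
    rw [hCov, structuralCov, nonsing_inv_mul_cancel_right _ _ hB, transpose_nonsing_inv]
  have hsum : ∑ b : A, Cov a b * Λ b i = (Cov * Λ) a i := by
    rw [sum_coe_sort A (fun b => Cov a b * Λ b i), mul_apply]
    exact sum_subset (subset_univ A) fun b _ hb => by rw [hA b hb, mul_zero]
  have hentry := congrFun (congrFun hmul a) i
  rwa [mul_sub, mul_one, Matrix.sub_apply, mul_diagonal, transpose_apply, ← hsum] at hentry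

variable {E : V → V → Prop} {Λ : Matrix V V ℝ} {ω : V → ℝ}

theorem posDef_structuralCov (hB : IsUnit (1 - Λ).det) (hω : ∀ a, 0 < ω a) :
    (structuralCov Λ ω).PosDef := by
  rw [structuralCov, ← transpose_nonsing_inv, ← conjTranspose_eq_transpose_of_trivial]
  exact (posDef_diagonal_iff.2 hω).conjTranspose_mul_mul_same
    (mulVec_injective_of_isUnit (isUnit_nonsing_inv_iff.2 ((isUnit_iff_isUnit_det _).2 hB)))

theorem condVar_structuralCov_eq (hacyc : ∀ v, ¬ TransGen E v v)
    (hΛ : ∀ a b, ¬ E a b → Λ a b = 0) (hω : ∀ a, 0 < ω a) {i : V} {A : Finset V}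
    (hpa : ∀ k, E k i → k ∈ A) (hde : ∀ a ∈ A, ¬ ReflTransGen E i a) :
    condVar (structuralCov Λ ω) i A = ω i := by
  have hB := isUnit_det_one_sub_of_acyclic hacyc hΛ
  have hA : ∀ b ∉ A, Λ b i = 0 := fun b hb => hΛ b i (mt (hpa b) hb)
  have hS := ((posDef_structuralCov hB hω).submatrix (m := A) Subtype.val_injective).isUnit
  rw [condVar_eq_of_submatrix_mulVec_eq ((isUnit_iff_isUnit_det _).1 hS) (c := fun b => Λ b i)]
  · have hii := structuralCov_sub_sum_mul_apply hB ω i hA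
    rwa [inv_one_sub_apply_self_of_acyclic hacyc hΛ, one_mul] at hii
  · funext a
    have hai := structuralCov_sub_sum_mul_apply hB ω a hA
    rw [not_not.1 (mt (reflTransGen_of_inv_one_sub_apply_ne_zero hacyc hΛ) (hde a a.2)),
      zero_mul, sub_eq_zero] at hai
    exact hai.symm

end StructuralEquations

theorem stmt7_general {V : Type*} [Fintype V] [DecidableEq V]
    (E : V → V → Prop) (hacyc : ∀ i, ¬ Relation.TransGen E i i)
    (r : V → V → Prop)
    (i j : V) (hrij : r i j)
    (Ai Aj : Finset V)
    (hpai : ∀ k, E k i → k ∈ Ai) (hdei : ∀ a ∈ Ai, ¬ Relation.ReflTransGen E i a)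
    (hpaj : ∀ k, E k j → k ∈ Aj) (hdej : ∀ a ∈ Aj, ¬ Relation.ReflTransGen E j a) :
    ∀ Cov ∈ PHModel E r, condVar Cov i Ai = condVar Cov j Aj := by
  rintro Cov ⟨Λ, ω, hΛ, hω, hrω, rfl⟩
  calc condVar (structuralCov Λ ω) i Ai
      = ω i := condVar_structuralCov_eq hacyc hΛ hω hpai hdei
    _ = ω j := hrω i j hrij
    _ = condVar (structuralCov Λ ω) j Aj :=
      (condVar_structuralCov_eq hacyc hΛ hω hpaj hdej).symm

/-- if `i ∼_Π j` are distinct and `pa(i) ⊆ A_i ⊆ V \ de(i)`,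
`pa(j) ⊆ A_j ⊆ V \ de(j)`, then every `Σ ∈ M_{G,Π}` satisfies the equal
conditional variance constraint
`Σ_{ii} - Σ_{i,A_i}(Σ_{A_i,A_i})⁻¹Σ_{A_i,i} = Σ_{jj} - Σ_{j,A_j}(Σ_{A_j,A_j})⁻¹Σ_{A_j,j}`. -/
theorem stmt7 {V : Type*} [Fintype V] [DecidableEq V]
    (E : V → V → Prop) (hacyc : ∀ i, ¬ Relation.TransGen E i i)
    (r : V → V → Prop) (hr : Equivalence r)
    (i j : V) (hij : i ≠ j) (hrij : r i j)
    (Ai Aj : Finset V) (hiAi : i ∉ Ai) (hjAj : j ∉ Aj)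
    (hpai : ∀ k, E k i → k ∈ Ai) (hdei : ∀ a ∈ Ai, ¬ Relation.ReflTransGen E i a)
    (hpaj : ∀ k, E k j → k ∈ Aj) (hdej : ∀ a ∈ Aj, ¬ Relation.ReflTransGen E j a) :
    ∀ Cov ∈ PHModel E r, condVar Cov i Ai = condVar Cov j Aj :=
  stmt7_general E hacyc r i j hrij Ai Aj hpai hdei hpaj hdej
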